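/- Let AB be a geodesic segment in H³ of length at least 2D (for D > 0), and let γ be a bi-infinite geodesic with d(A, γ) < 1 and d(B, γ) < 1. Then for any point W on the segment AB with d(W, A) > D and d(W, B) > D, one has d(W, γ) ≤ 3e^{-D}. -/

import Mathlib

/-- Inverse hyperbolic cosine. -/
noncomputable def arcosh (x : ℝ) : ℝ := Real.log (x + Real.sqrt (x ^ 2 - 1))

/-- Hyperbolic distance between two points of the upper half-space model of `H³`
(points of `ℝ × ℝ × ℝ` with positive third coordinate), given by the standard formula
`cosh d = 1 + ‖p - q‖² / (2 zₚ z_q)`. -/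
noncomputable def hDist (p q : ℝ × ℝ × ℝ) : ℝ :=
  arcosh (1 + ((p.1 - q.1) ^ 2 + (p.2.1 - q.2.1) ^ 2 + (p.2.2 - q.2.2) ^ 2) /
    (2 * p.2.2 * q.2.2))

/-- A bi-infinite geodesic of `H³` (upper half-space model): the image of an isometric
embedding of `ℝ`. -/
def IsGeodesicLine (γ : Set (ℝ × ℝ × ℝ)) : Prop :=
  ∃ f : ℝ → ℝ × ℝ × ℝ, (∀ t, 0 < (f t).2.2) ∧ (∀ s t, hDist (f s) (f t) = |s - t|) ∧
    γ = Set.range f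

/-!
In the hyperboloid model a geodesic is `t ↦ cosh t • u + sinh t • v` for a Minkowski-orthonormal
timelike/spacelike pair `(u, v)`, and `sinh² d(x, γ)` is the Minkowski square of the projection of
`x` onto `span {u, v}ᗮ`, a positive semidefinite quadratic form. A point `W` of the segment `AB`
with `d(A, W) = s`, `d(W, B) = t` is `(sinh t • A + sinh s • B) / sinh (s + t)`, so the triangle
inequality for that form gives
`sinh d(W, γ) ≤ (sinh s + sinh t) / sinh (s + t) · sinh 1 ≤ 2 e^{-D} · sinh 1 ≤ 3 e^{-D}`,
and `d ≤ sinh d`.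
-/

open Real hiding arcosh

local notation "ℝ⁴" => ℝ × ℝ × ℝ × ℝ

section UpperHalfSpace

variable {p q : ℝ × ℝ × ℝ}

lemma hDist_comm (p q : ℝ × ℝ × ℝ) : hDist p q = hDist q p := by
  simp only [hDist]
  ring_nf

lemma one_le_cosh_hDist_arg (hp : 0 < p.2.2) (hq : 0 < q.2.2) :
    1 ≤ 1 + ((p.1 - q.1) ^ 2 + (p.2.1 - q.2.1) ^ 2 + (p.2.2 - q.2.2) ^ 2) /
      (2 * p.2.2 * q.2.2) :=
  le_add_of_nonneg_right (by positivity)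

lemma cosh_hDist (hp : 0 < p.2.2) (hq : 0 < q.2.2) :
    cosh (hDist p q) = 1 + ((p.1 - q.1) ^ 2 + (p.2.1 - q.2.1) ^ 2 + (p.2.2 - q.2.2) ^ 2) /
      (2 * p.2.2 * q.2.2) :=
  cosh_arcosh (one_le_cosh_hDist_arg hp hq)

lemma hDist_nonneg (hp : 0 < p.2.2) (hq : 0 < q.2.2) : 0 ≤ hDist p q :=
  arcosh_nonneg (one_le_cosh_hDist_arg hp hq)

end UpperHalfSpace

noncomputable def minkowski : LinearMap.BilinForm ℝ ℝ⁴ :=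
  LinearMap.mk₂ ℝ
    (fun x y => -(x.1 * y.1) + x.2.1 * y.2.1 + x.2.2.1 * y.2.2.1 + x.2.2.2 * y.2.2.2)
    (fun _ _ _ => by simp only [Prod.fst_add, Prod.snd_add]; ring)
    (fun _ _ _ => by simp only [Prod.smul_fst, Prod.smul_snd, smul_eq_mul]; ring)
    (fun _ _ _ => by simp only [Prod.fst_add, Prod.snd_add]; ring)
    (fun _ _ _ => by simp only [Prod.smul_fst, Prod.smul_snd, smul_eq_mul]; ring)

lemma minkowski_apply (x y : ℝ⁴) :
    minkowski x y = -(x.1 * y.1) + x.2.1 * y.2.1 + x.2.2.1 * y.2.2.1 + x.2.2.2 * y.2.2.2 :=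
  rfl

lemma minkowski_comm (x y : ℝ⁴) : minkowski x y = minkowski y x := by
  simp only [minkowski_apply]
  ring

/-- The isometry from the upper half-space model onto the hyperboloid model. -/
noncomputable def toHyperboloid (p : ℝ × ℝ × ℝ) : ℝ⁴ :=
  ((p.1 ^ 2 + p.2.1 ^ 2 + p.2.2 ^ 2 + 1) / (2 * p.2.2), p.1 / p.2.2, p.2.1 / p.2.2,
    (p.1 ^ 2 + p.2.1 ^ 2 + p.2.2 ^ 2 - 1) / (2 * p.2.2))

lemma minkowski_toHyperboloid {p q : ℝ × ℝ × ℝ} (hp : 0 < p.2.2) (hq : 0 < q.2.2) :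
    minkowski (toHyperboloid p) (toHyperboloid q) = -cosh (hDist p q) := by
  rw [cosh_hDist hp hq, minkowski_apply]
  simp only [toHyperboloid]
  field_simp
  ring

lemma minkowski_toHyperboloid_self {p : ℝ × ℝ × ℝ} (hp : 0 < p.2.2) :
    minkowski (toHyperboloid p) (toHyperboloid p) = -1 := by
  rw [minkowski_toHyperboloid hp hp, cosh_hDist hp hp]
  simp

section TimelikeComplement

variable {u r : ℝ⁴}

lemma spatial_sq_le_of_minkowski_orthogonal (hu : minkowski u u = -1)
    (hr : minkowski u r = 0) :
    r.2.1 ^ 2 + r.2.2.1 ^ 2 + r.2.2.2 ^ 2 ≤ u.1 ^ 2 * minkowski r r := by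
  obtain ⟨u0, u1, u2, u3⟩ := u
  obtain ⟨r0, r1, r2, r3⟩ := r
  simp only [minkowski_apply] at *
  have lagrange : (u1 * r1 + u2 * r2 + u3 * r3) ^ 2 ≤
      (u1 ^ 2 + u2 ^ 2 + u3 ^ 2) * (r1 ^ 2 + r2 ^ 2 + r3 ^ 2) := by
    nlinarith [sq_nonneg (u1 * r2 - u2 * r1), sq_nonneg (u1 * r3 - u3 * r1),
      sq_nonneg (u2 * r3 - u3 * r2)]
  have hur : u0 * r0 = u1 * r1 + u2 * r2 + u3 * r3 := by linarith
  have hu0 : u1 ^ 2 + u2 ^ 2 + u3 ^ 2 = u0 ^ 2 - 1 := by linarith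
  rw [← hur, hu0] at lagrange
  nlinarith [lagrange]

lemma minkowski_self_nonneg_of_orthogonal (hu : minkowski u u = -1)
    (hr : minkowski u r = 0) : 0 ≤ minkowski r r := by
  have h := spatial_sq_le_of_minkowski_orthogonal hu hr
  have hu0 : 0 < u.1 ^ 2 := by
    rw [minkowski_apply] at hu
    nlinarith [sq_nonneg u.2.1, sq_nonneg u.2.2.1, sq_nonneg u.2.2.2]
  exact nonneg_of_mul_nonneg_right ((by positivity : (0:ℝ) ≤ _).trans h) hu0

lemma eq_zero_of_minkowski_orthogonal_of_self_eq_zero (hu : minkowski u u = -1)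
    (hr : minkowski u r = 0) (hrr : minkowski r r = 0) : r = 0 := by
  have h := spatial_sq_le_of_minkowski_orthogonal hu hr
  rw [hrr, mul_zero] at h
  obtain ⟨u0, u1, u2, u3⟩ := u
  obtain ⟨r0, r1, r2, r3⟩ := r
  simp only [minkowski_apply] at *
  have h1 : r1 = 0 := by nlinarith [sq_nonneg r1, sq_nonneg r2, sq_nonneg r3]
  have h2 : r2 = 0 := by nlinarith [sq_nonneg r1, sq_nonneg r2, sq_nonneg r3]
  have h3 : r3 = 0 := by nlinarith [sq_nonneg r1, sq_nonneg r2, sq_nonneg r3]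
  subst h1 h2 h3
  have h0 : r0 = 0 := by nlinarith
  simp [h0]

end TimelikeComplement

lemma eq_smul_add_smul_of_minkowski_eq_neg_cosh {a b w : ℝ⁴} {s t : ℝ}
    (ha : minkowski a a = -1) (hb : minkowski b b = -1) (hw : minkowski w w = -1)
    (haw : minkowski a w = -cosh s) (hwb : minkowski w b = -cosh t)
    (hab : minkowski a b = -cosh (s + t)) (hst : s + t ≠ 0) :
    w = (sinh t / sinh (s + t)) • a + (sinh s / sinh (s + t)) • b := by
  have hS : sinh (s + t) ≠ 0 := sinh_ne_zero.2 hst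
  set α := sinh t / sinh (s + t)
  set β := sinh s / sinh (s + t)
  have h1 : α * cosh s + β * cosh t = 1 := by
    simp only [α, β]
    field_simp
    rw [sinh_add]
    ring
  have h2 : α + β * cosh (s + t) = cosh s := by
    simp only [α, β]
    field_simp
    rw [sinh_add, cosh_add]
    linear_combination (-sinh t) * cosh_sq s
  have h3 : α * cosh (s + t) + β = cosh t := by
    simp only [α, β]
    field_simp
    rw [sinh_add, cosh_add]
    linear_combination (-sinh s) * cosh_sq t
  clear_value α β
  rw [← sub_eq_zero]
  apply eq_zero_of_minkowski_orthogonal_of_self_eq_zero ha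
  · simp only [map_sub, map_add, map_smul, smul_eq_mul, haw, ha, hab]
    linear_combination h2
  · simp only [map_sub, map_add, map_smul, LinearMap.sub_apply, LinearMap.add_apply,
      LinearMap.smul_apply, smul_eq_mul, minkowski_comm w a, minkowski_comm b w,
      minkowski_comm b a, ha, hb, hw, haw, hwb, hab]
    linear_combination h1 - α * h2 - β * h3

lemma toHyperboloid_eq_of_hDist_add_hDist_eq {A B W : ℝ × ℝ × ℝ} (hA : 0 < A.2.2)
    (hB : 0 < B.2.2) (hW : 0 < W.2.2) (hWAB : hDist A W + hDist W B = hDist A B)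
    (hAB : hDist A B ≠ 0) :
    toHyperboloid W = (sinh (hDist W B) / sinh (hDist A B)) • toHyperboloid A +
      (sinh (hDist A W) / sinh (hDist A B)) • toHyperboloid B := by
  rw [← hWAB] at hAB ⊢
  exact eq_smul_add_smul_of_minkowski_eq_neg_cosh (minkowski_toHyperboloid_self hA)
    (minkowski_toHyperboloid_self hB) (minkowski_toHyperboloid_self hW)
    (minkowski_toHyperboloid hA hW) (minkowski_toHyperboloid hW hB)
    (hWAB ▸ minkowski_toHyperboloid hA hB) hAB

structure IsLorentzFrame (u v : ℝ⁴) : Prop where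
  timelike : minkowski u u = -1
  spacelike : minkowski v v = 1
  orthogonal : minkowski u v = 0

lemma exists_isLorentzFrame_of_minkowski_eq_neg_cosh {c : ℝ → ℝ⁴}
    (hc : ∀ s t, minkowski (c s) (c t) = -cosh (s - t)) :
    ∃ v, IsLorentzFrame (c 0) v ∧ ∀ t, c t = cosh t • c 0 + sinh t • v := by
  have hs1 : sinh 1 ≠ 0 := sinh_ne_zero.2 one_ne_zero
  have hc0 (t : ℝ) : minkowski (c t) (c 0) = -cosh t := by simpa using hc t 0
  have hc1 (t : ℝ) : minkowski (c t) (c 1) = -cosh (t - 1) := hc t 1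
  set v := (sinh 1)⁻¹ • (c 1 - cosh 1 • c 0)
  have hcv (t : ℝ) : minkowski (c t) v = sinh t := by
    simp only [v, map_smul, map_sub, smul_eq_mul, hc0, hc1, cosh_sub]
    field_simp
    ring
  have huu : minkowski (c 0) (c 0) = -1 := by simpa using hc0 0
  have huv : minkowski (c 0) v = 0 := by simpa using hcv 0
  have hvv : minkowski v v = 1 := by
    simp only [v, map_smul, map_sub, LinearMap.smul_apply, LinearMap.sub_apply, smul_eq_mul,
      minkowski_comm (c 0) (c 1), hc0, hc1, cosh_zero, sub_self]
    field_simp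
    linear_combination cosh_sq 1
  refine ⟨v, ⟨huu, hvv, huv⟩, fun t => ?_⟩
  rw [← sub_eq_zero]
  apply eq_zero_of_minkowski_orthogonal_of_self_eq_zero huu
  · simp only [map_sub, map_add, map_smul, smul_eq_mul, minkowski_comm (c 0) (c t), hc0, huv,
      cosh_zero]
    ring
  · simp only [map_sub, map_add, map_smul, LinearMap.sub_apply, LinearMap.add_apply,
      LinearMap.smul_apply, smul_eq_mul, minkowski_comm (c 0) (c t), minkowski_comm v (c t),
      minkowski_comm v (c 0), hc0, hcv, hvv, hc t t, sub_self, cosh_zero, sinh_zero]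
    linear_combination cosh_sq t

structure IsGeodesicFrame (f : ℝ → ℝ × ℝ × ℝ) (u v : ℝ⁴) : Prop extends IsLorentzFrame u v where
  pos : ∀ t, 0 < (f t).2.2
  toHyperboloid_eq : ∀ t, toHyperboloid (f t) = cosh t • u + sinh t • v

lemma IsGeodesicLine.exists_isGeodesicFrame {γ : Set (ℝ × ℝ × ℝ)} (hγ : IsGeodesicLine γ) :
    ∃ f u v, γ = Set.range f ∧ IsGeodesicFrame f u v := by
  obtain ⟨f, hpos, hiso, rfl⟩ := hγ
  obtain ⟨v, hframe, heq⟩ := exists_isLorentzFrame_of_minkowski_eq_neg_cosh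
    (c := toHyperboloid ∘ f) fun s t => by
      rw [Function.comp_apply, Function.comp_apply, minkowski_toHyperboloid (hpos s) (hpos t),
        hiso, cosh_abs]
  exact ⟨f, _, v, rfl, hframe, hpos, heq⟩

/-- The `minkowski`-orthogonal projection onto `span {u, v}ᗮ`. For a frame of a geodesic, the
`minkowski`-square of the projection of a hyperboloid point is `sinh²` of its distance to the
geodesic. -/
noncomputable def perpProj (u v : ℝ⁴) : ℝ⁴ →ₗ[ℝ] ℝ⁴ :=
  LinearMap.id + (minkowski.flip u).smulRight u - (minkowski.flip v).smulRight v

lemma perpProj_apply (u v x : ℝ⁴) :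
    perpProj u v x = x + minkowski x u • u - minkowski x v • v :=
  rfl

namespace IsLorentzFrame

variable {u v : ℝ⁴} (h : IsLorentzFrame u v)
include h

lemma minkowski_perpProj_right (x : ℝ⁴) : minkowski u (perpProj u v x) = 0 := by
  simp only [perpProj_apply, map_sub, map_add, map_smul, smul_eq_mul, h.timelike,
    h.orthogonal, minkowski_comm u x]
  ring

lemma minkowski_perpProj_self_nonneg (x : ℝ⁴) :
    0 ≤ minkowski (perpProj u v x) (perpProj u v x) :=
  minkowski_self_nonneg_of_orthogonal h.timelike (h.minkowski_perpProj_right x)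

lemma minkowski_perpProj_self (x : ℝ⁴) :
    minkowski (perpProj u v x) (perpProj u v x) =
      minkowski x x + minkowski x u ^ 2 - minkowski x v ^ 2 := by
  simp only [perpProj_apply, map_sub, map_add, map_smul, LinearMap.sub_apply,
    LinearMap.add_apply, LinearMap.smul_apply, smul_eq_mul, h.timelike, h.spacelike,
    h.orthogonal, minkowski_comm u x, minkowski_comm v x, minkowski_comm v u]
  ring

lemma minkowski_perpProj_smul_add_smul_le {x y : ℝ⁴} {α β a b : ℝ} (hα : 0 ≤ α) (hβ : 0 ≤ β)
    (ha : 0 ≤ a) (hb : 0 ≤ b)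
    (hx : minkowski (perpProj u v x) (perpProj u v x) ≤ a ^ 2)
    (hy : minkowski (perpProj u v y) (perpProj u v y) ≤ b ^ 2) :
    minkowski (perpProj u v (α • x + β • y)) (perpProj u v (α • x + β • y)) ≤
      (α * a + β * b) ^ 2 := by
  set P := perpProj u v
  have cauchySchwarz := LinearMap.BilinForm.apply_mul_apply_le_of_forall_zero_le
    (minkowski.compl₁₂ P P) h.minkowski_perpProj_self_nonneg x y
  simp only [LinearMap.compl₁₂_apply, minkowski_comm (P y) (P x)] at cauchySchwarz
  have hxy : minkowski (P x) (P y) ≤ a * b := by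
    refine (abs_le_of_sq_le_sq' ?_ (by positivity)).2
    calc minkowski (P x) (P y) ^ 2 ≤ minkowski (P x) (P x) * minkowski (P y) (P y) := by
          rwa [sq]
      _ ≤ a ^ 2 * b ^ 2 := mul_le_mul hx hy (h.minkowski_perpProj_self_nonneg y) (sq_nonneg a)
      _ = (a * b) ^ 2 := by ring
  simp only [map_add, map_smul, LinearMap.add_apply, LinearMap.smul_apply, smul_eq_mul,
    minkowski_comm (P y) (P x)]
  nlinarith [mul_le_mul_of_nonneg_left hxy (mul_nonneg hα hβ),
    mul_le_mul_of_nonneg_left hx (sq_nonneg α), mul_le_mul_of_nonneg_left hy (sq_nonneg β)]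

end IsLorentzFrame

lemma sq_sub_sq_le_sq_mul_cosh_add_mul_sinh (p q t : ℝ) :
    p ^ 2 - q ^ 2 ≤ (p * cosh t + q * sinh t) ^ 2 := by
  nlinarith [sq_nonneg (p * sinh t + q * cosh t), cosh_sq t]

lemma exists_mul_cosh_add_mul_sinh_eq_sqrt {p q : ℝ} (hp : 0 < p) (hpq : q ^ 2 < p ^ 2) :
    ∃ t, p * cosh t + q * sinh t = √(p ^ 2 - q ^ 2) := by
  set c := √(p ^ 2 - q ^ 2)
  have hc : 0 < c := sqrt_pos.2 (by linarith)
  have hc2 : c ^ 2 = p ^ 2 - q ^ 2 := sq_sqrt (by linarith)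
  refine ⟨arsinh (-q / c), ?_⟩
  have hcosh : cosh (arsinh (-q / c)) = p / c := by
    rw [cosh_arsinh, ← sqrt_sq (div_pos hp hc).le]
    congr 1
    field_simp
    linarith
  rw [hcosh, sinh_arsinh]
  field_simp
  linarith

namespace IsGeodesicFrame

variable {f : ℝ → ℝ × ℝ × ℝ} {u v : ℝ⁴} (hF : IsGeodesicFrame f u v)
include hF

lemma minkowski_toHyperboloid_right (x : ℝ⁴) (t : ℝ) :
    minkowski x (toHyperboloid (f t)) = cosh t * minkowski x u + sinh t * minkowski x v := by
  rw [hF.toHyperboloid_eq, map_add, map_smul, map_smul, smul_eq_mul, smul_eq_mul]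

lemma sInf_hDist_le {P : ℝ × ℝ × ℝ} (hP : 0 < P.2.2) (t : ℝ) :
    sInf (hDist P '' Set.range f) ≤ hDist P (f t) := by
  refine csInf_le ⟨0, ?_⟩ ⟨f t, Set.mem_range_self t, rfl⟩
  rintro _ ⟨_, ⟨s, rfl⟩, rfl⟩
  exact hDist_nonneg hP (hF.pos s)

lemma minkowski_perpProj_self_lt_of_sInf_hDist_lt {P : ℝ × ℝ × ℝ} {ρ : ℝ} (hP : 0 < P.2.2)
    (hρ : sInf (hDist P '' Set.range f) < ρ) :
    minkowski (perpProj u v (toHyperboloid P)) (perpProj u v (toHyperboloid P)) <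
      sinh ρ ^ 2 := by
  obtain ⟨_, ⟨_, ⟨t, rfl⟩, rfl⟩, hρ⟩ :=
    exists_lt_of_csInf_lt ((Set.range_nonempty f).image _) hρ
  set a := minkowski (toHyperboloid P) u
  set b := minkowski (toHyperboloid P) v
  have hcosh : a * cosh t + b * sinh t = -cosh (hDist P (f t)) := by
    rw [← minkowski_toHyperboloid hP (hF.pos t), hF.minkowski_toHyperboloid_right]
    ring
  calc minkowski (perpProj u v (toHyperboloid P)) (perpProj u v (toHyperboloid P))
      = a ^ 2 - b ^ 2 - 1 := by
        rw [hF.minkowski_perpProj_self, minkowski_toHyperboloid_self hP]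
        ring
    _ ≤ (a * cosh t + b * sinh t) ^ 2 - 1 := by
        linarith [sq_sub_sq_le_sq_mul_cosh_add_mul_sinh a b t]
    _ = sinh (hDist P (f t)) ^ 2 := by
        rw [hcosh, neg_sq, cosh_sq]
        ring
    _ < sinh ρ ^ 2 :=
        pow_lt_pow_left₀ (sinh_lt_sinh.2 hρ) (sinh_nonneg_iff.2 (hDist_nonneg hP (hF.pos t)))
          two_ne_zero

lemma sInf_hDist_le_of_minkowski_perpProj_self_le {P : ℝ × ℝ × ℝ} {ρ : ℝ} (hP : 0 < P.2.2)
    (hρ : 0 ≤ ρ)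
    (h : minkowski (perpProj u v (toHyperboloid P)) (perpProj u v (toHyperboloid P)) ≤
      sinh ρ ^ 2) :
    sInf (hDist P '' Set.range f) ≤ ρ := by
  set a := minkowski (toHyperboloid P) u
  set b := minkowski (toHyperboloid P) v
  have hcosh (t : ℝ) : cosh (hDist P (f t)) = -a * cosh t + -b * sinh t := by
    rw [← neg_eq_iff_eq_neg.2 (minkowski_toHyperboloid hP (hF.pos t)),
      hF.minkowski_toHyperboloid_right]
    ring
  have ha : 0 < -a := by
    have h0 := hcosh 0
    rw [cosh_zero, sinh_zero] at h0
    linarith [cosh_pos (hDist P (f 0))]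
  have hab : (-a) ^ 2 - (-b) ^ 2 =
      1 + minkowski (perpProj u v (toHyperboloid P)) (perpProj u v (toHyperboloid P)) := by
    rw [hF.minkowski_perpProj_self, minkowski_toHyperboloid_self hP]
    ring
  obtain ⟨t, ht⟩ := exists_mul_cosh_add_mul_sinh_eq_sqrt (q := -b) ha
    (by linarith [hF.minkowski_perpProj_self_nonneg (toHyperboloid P)])
  refine (hF.sInf_hDist_le hP t).trans ?_
  have hle : cosh (hDist P (f t)) ≤ cosh ρ :=
    calc cosh (hDist P (f t)) = √((-a) ^ 2 - (-b) ^ 2) := by rw [hcosh, ht]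
      _ ≤ √(cosh ρ ^ 2) := sqrt_le_sqrt (by rw [hab, cosh_sq]; linarith)
      _ = cosh ρ := sqrt_sq (cosh_pos ρ).le
  rwa [cosh_le_cosh, abs_of_nonneg (hDist_nonneg hP (hF.pos t)), abs_of_nonneg hρ] at hle

end IsGeodesicFrame

lemma sinh_add_sinh_div_sinh_add_le {D s t : ℝ} (hD : 0 ≤ D) (hs : D ≤ s) (ht : D ≤ t) :
    (sinh s + sinh t) / sinh (s + t) ≤ 2 * exp (-D) := by
  have hsinh_s : 0 ≤ sinh s := sinh_nonneg_iff.2 (hD.trans hs)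
  have hsinh_t : 0 ≤ sinh t := sinh_nonneg_iff.2 (hD.trans ht)
  have hcosh_s : cosh D ≤ cosh s := cosh_le_cosh.2 (abs_le_abs_of_nonneg hD hs)
  have hcosh_t : cosh D ≤ cosh t := cosh_le_cosh.2 (abs_le_abs_of_nonneg hD ht)
  have hexp : 1 ≤ 2 * exp (-D) * cosh D := by
    have hinv : exp (-D) * exp D = 1 := by rw [← exp_add, neg_add_cancel, exp_zero]
    rw [cosh_eq]
    nlinarith [sq_nonneg (exp (-D))]
  apply div_le_of_le_mul₀ (sinh_nonneg_iff.2 (by linarith)) (by positivity)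
  calc sinh s + sinh t ≤ (sinh s + sinh t) * (2 * exp (-D) * cosh D) := by nlinarith
    _ ≤ 2 * exp (-D) * sinh (s + t) := by
      rw [sinh_add]
      nlinarith [exp_pos (-D), mul_le_mul_of_nonneg_left hcosh_t hsinh_s,
        mul_le_mul_of_nonneg_left hcosh_s hsinh_t]

lemma sinh_one_le : sinh 1 ≤ 3 / 2 := by
  rw [sinh_eq]
  linarith [exp_one_lt_d9, exp_pos (-1)]

theorem dist_to_geodesic_exponential_decay_general
    (D : ℝ) (hD : 0 < D)
    (A B W : ℝ × ℝ × ℝ) (hA : 0 < A.2.2) (hB : 0 < B.2.2) (hW : 0 < W.2.2)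
    (hWseg : hDist A W + hDist W B = hDist A B)
    (hWA : D < hDist W A) (hWB : D < hDist W B)
    (γ : Set (ℝ × ℝ × ℝ)) (hγ : IsGeodesicLine γ)
    (hAγ : sInf (hDist A '' γ) < 1) (hBγ : sInf (hDist B '' γ) < 1) :
    sInf (hDist W '' γ) ≤ 3 * Real.exp (-D) := by
  obtain ⟨f, u, v, rfl, hF⟩ := hγ.exists_isGeodesicFrame
  rw [hDist_comm] at hWA
  have hAB : 0 < hDist A B := by linarith
  have hsinh1 : 0 ≤ sinh 1 := sinh_nonneg_iff.2 zero_le_one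
  have hα : 0 ≤ sinh (hDist W B) / sinh (hDist A B) :=
    div_nonneg (sinh_nonneg_iff.2 (by linarith)) (sinh_nonneg_iff.2 hAB.le)
  have hβ : 0 ≤ sinh (hDist A W) / sinh (hDist A B) :=
    div_nonneg (sinh_nonneg_iff.2 (by linarith)) (sinh_nonneg_iff.2 hAB.le)
  have hcoeff : sinh (hDist W B) / sinh (hDist A B) * sinh 1 +
      sinh (hDist A W) / sinh (hDist A B) * sinh 1 ≤ 3 * exp (-D) :=
    calc _ = (sinh (hDist A W) + sinh (hDist W B)) / sinh (hDist A W + hDist W B) * sinh 1 := by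
          rw [hWseg]; ring
      _ ≤ 2 * exp (-D) * (3 / 2) :=
          mul_le_mul (sinh_add_sinh_div_sinh_add_le hD.le hWA.le hWB.le) sinh_one_le hsinh1
            (by positivity)
      _ = 3 * exp (-D) := by ring
  refine hF.sInf_hDist_le_of_minkowski_perpProj_self_le hW (by positivity) ?_
  rw [toHyperboloid_eq_of_hDist_add_hDist_eq hA hB hW hWseg hAB.ne']
  refine (hF.minkowski_perpProj_smul_add_smul_le hα hβ hsinh1 hsinh1
    (hF.minkowski_perpProj_self_lt_of_sInf_hDist_lt hA hAγ).le
    (hF.minkowski_perpProj_self_lt_of_sInf_hDist_lt hB hBγ).le).trans ?_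
  exact pow_le_pow_left₀ (by positivity) (hcoeff.trans (self_le_sinh_iff.2 (by positivity))) 2

/-- Let `AB` be a geodesic segment in `H³` of length at least `2D`
(`D > 0`), and let `γ` be a bi-infinite geodesic with `d(A, γ) < 1` and `d(B, γ) < 1`.
Then any point `W` on the segment `AB` with `d(W, A) > D` and `d(W, B) > D` satisfies
`d(W, γ) ≤ 3 e^{-D}`. -/
theorem dist_to_geodesic_exponential_decay
    (D : ℝ) (hD : 0 < D)
    (A B W : ℝ × ℝ × ℝ) (hA : 0 < A.2.2) (hB : 0 < B.2.2) (hW : 0 < W.2.2)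
    (hAB : 2 * D ≤ hDist A B)
    (hWseg : hDist A W + hDist W B = hDist A B)
    (hWA : D < hDist W A) (hWB : D < hDist W B)
    (γ : Set (ℝ × ℝ × ℝ)) (hγ : IsGeodesicLine γ)
    (hAγ : sInf (hDist A '' γ) < 1) (hBγ : sInf (hDist B '' γ) < 1) :
    sInf (hDist W '' γ) ≤ 3 * Real.exp (-D) :=
  dist_to_geodesic_exponential_decay_general D hD A B W hA hB hW hWseg hWA hWB γ hγ hAγ hBγ
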